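/- Assume the structure constants are nonnegative. Let z ∈ ℝ_+^n × ℝ_+^ν. If ((1/16) · max_{i,p} max(σ_{ip}, σ_{ip}^4) · max_{(i,p),(j,q)} γ_{ip} γ̃_{jq})^{1/3} · ϖ(z) < 1, then lim_{t→+∞} ϖ(W^t(z)) = 0. -/

import Mathlib

open Filter

/-- The gonosomic evolution operator `W` on `ℝ^n × ℝ^ν` associated with structure constants
`γ_{ipk}` and `γ̃_{ipr}`: it maps `((x_i), (y_p))` to `((x'_k), (y'_r))` with
`x'_k = Σ_{i,p} γ_{ipk} x_i y_p` and `y'_r = Σ_{i,p} γ̃_{ipr} x_i y_p`. -/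
noncomputable def W {n ν : ℕ} (γ : Fin n → Fin ν → Fin n → ℝ)
    (γ' : Fin n → Fin ν → Fin ν → ℝ)
    (z : (Fin n → ℝ) × (Fin ν → ℝ)) : (Fin n → ℝ) × (Fin ν → ℝ) :=
  (fun k => ∑ i, ∑ p, γ i p k * z.1 i * z.2 p,
   fun r => ∑ i, ∑ p, γ' i p r * z.1 i * z.2 p)

/-- The linear form `ϖ(z) = Σ_i x_i + Σ_p y_p` on `ℝ^n × ℝ^ν`. -/
noncomputable def piW {n ν : ℕ} (z : (Fin n → ℝ) × (Fin ν → ℝ)) : ℝ :=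
  ∑ i, z.1 i + ∑ p, z.2 p

/-- `γ_{ip} = Σ_k γ_{ipk}`. -/
noncomputable def gA {n ν : ℕ} (γ : Fin n → Fin ν → Fin n → ℝ)
    (i : Fin n) (p : Fin ν) : ℝ := ∑ k, γ i p k

/-- `γ̃_{ip} = Σ_r γ̃_{ipr}`. -/
noncomputable def gB {n ν : ℕ} (γ' : Fin n → Fin ν → Fin ν → ℝ)
    (i : Fin n) (p : Fin ν) : ℝ := ∑ r, γ' i p r

/-- `σ_{ip} = γ_{ip} + γ̃_{ip}`. -/
noncomputable def σc {n ν : ℕ} (γ : Fin n → Fin ν → Fin n → ℝ)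
    (γ' : Fin n → Fin ν → Fin ν → ℝ) (i : Fin n) (p : Fin ν) : ℝ :=
  gA γ i p + gB γ' i p

/-- The set `O^{n,ν}` of nonnegative points `((x_i),(y_p))` with `x_i y_p = 0` for every
pair `(i,p)` with `σ_{ip} ≠ 0`. -/
def Oset {n ν : ℕ} (γ : Fin n → Fin ν → Fin n → ℝ)
    (γ' : Fin n → Fin ν → Fin ν → ℝ) : Set ((Fin n → ℝ) × (Fin ν → ℝ)) :=
  {z | (∀ i, 0 ≤ z.1 i) ∧ (∀ p, 0 ≤ z.2 p) ∧
    ∀ i p, σc γ γ' i p ≠ 0 → z.1 i * z.2 p = 0}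

/-- The set `S^{n,ν} = S^{n+ν-1} \ O^{n,ν}`, where `S^{n+ν-1}` is the simplex of nonnegative
points with `ϖ(z) = 1`. -/
def Sset {n ν : ℕ} (γ : Fin n → Fin ν → Fin n → ℝ)
    (γ' : Fin n → Fin ν → Fin ν → ℝ) : Set ((Fin n → ℝ) × (Fin ν → ℝ)) :=
  {z | (∀ i, 0 ≤ z.1 i) ∧ (∀ p, 0 ≤ z.2 p) ∧ piW z = 1} \ Oset γ γ'

/-- The normalized gonosomic operator `V(z) = (1/ϖ(W z)) • W z` (junk value when
`ϖ(W z) = 0`, since in `ℝ` we have `0⁻¹ = 0`). -/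
noncomputable def V {n ν : ℕ} (γ : Fin n → Fin ν → Fin n → ℝ)
    (γ' : Fin n → Fin ν → Fin ν → ℝ)
    (z : (Fin n → ℝ) × (Fin ν → ℝ)) : (Fin n → ℝ) × (Fin ν → ℝ) :=
  (piW (W γ γ' z))⁻¹ • W γ γ' z

/-! On the nonnegative cone `ϖ(W z) = Σ σ_ip x_i y_p ≤ M₃ (Σ x)(Σ y) ≤ (M₃/4) ϖ(z)²` by AM-GM.
The two halves of `W z` have masses `Σ γ_ip x_i y_p` and `Σ γ̃_ip x_i y_p`, so applying the same
bound to `W z` gives `ϖ(W² z) ≤ M₃ M₂ ((Σ x)(Σ y))² ≤ a³ ϖ(z)⁴` with `a³ = M₃ M₂ / 16`.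
With `u = a ϖ(z) < 1` this yields `ϖ(W^{2s} z) ≤ ϖ(z) uˢ`, and the odd iterates are controlled by
the one-step bound. -/
theorem tendsto_of_tendsto_even_odd {α : Type*} {f : ℕ → α} {l : Filter α}
    (h_even : Tendsto (fun k => f (2 * k)) atTop l)
    (h_odd : Tendsto (fun k => f (2 * k + 1)) atTop l) : Tendsto f atTop l := by
  intro s hs
  obtain ⟨a, ha⟩ := mem_atTop_sets.1 (h_even hs)
  obtain ⟨b, hb⟩ := mem_atTop_sets.1 (h_odd hs)
  refine mem_atTop_sets.2 ⟨2 * max a b + 1, fun t ht => ?_⟩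
  obtain ⟨k, rfl | rfl⟩ := Nat.even_or_odd' t
  · exact ha k (by omega)
  · exact hb k (by omega)

theorem le_mul_pow_of_le_cube_mul_pow_four {Q : ℕ → ℝ} {a : ℝ} (ha : 0 ≤ a)
    (hQ : ∀ s, 0 ≤ Q s) (hu : a * Q 0 ≤ 1) (hstep : ∀ s, Q (s + 1) ≤ a ^ 3 * Q s ^ 4)
    (s : ℕ) : Q s ≤ Q 0 * (a * Q 0) ^ s := by
  have hu0 : 0 ≤ a * Q 0 := mul_nonneg ha (hQ 0)
  induction s with
  | zero => simp
  | succ s ih =>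
    calc Q (s + 1) ≤ a ^ 3 * Q s ^ 4 := hstep s
      _ ≤ a ^ 3 * (Q 0 * (a * Q 0) ^ s) ^ 4 := by gcongr; exact hQ s
      _ = Q 0 * (a * Q 0) ^ (4 * s + 3) := by ring
      _ ≤ Q 0 * (a * Q 0) ^ (s + 1) :=
        mul_le_mul_of_nonneg_left (pow_le_pow_of_le_one hu0 hu (by omega)) (hQ 0)

theorem tendsto_zero_of_le_cube_mul_pow_four {Q : ℕ → ℝ} {a : ℝ} (ha : 0 ≤ a)
    (hQ : ∀ s, 0 ≤ Q s) (hu : a * Q 0 < 1) (hstep : ∀ s, Q (s + 1) ≤ a ^ 3 * Q s ^ 4) :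
    Tendsto Q atTop (nhds 0) := by
  have hgeom := (tendsto_pow_atTop_nhds_zero_of_lt_one (mul_nonneg ha (hQ 0)) hu).const_mul (Q 0)
  rw [mul_zero] at hgeom
  exact squeeze_zero hQ (le_mul_pow_of_le_cube_mul_pow_four ha hQ hu.le hstep) hgeom

theorem tendsto_zero_of_le_sq_of_le_pow_four {P : ℕ → ℝ} {a c : ℝ} (ha : 0 ≤ a)
    (hP : ∀ t, 0 ≤ P t) (hu : a * P 0 < 1) (h_one : ∀ t, P (t + 1) ≤ c * P t ^ 2)
    (h_two : ∀ t, P (t + 2) ≤ a ^ 3 * P t ^ 4) : Tendsto P atTop (nhds 0) := by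
  have h_even : Tendsto (fun k => P (2 * k)) atTop (nhds 0) :=
    tendsto_zero_of_le_cube_mul_pow_four ha (fun k => hP _) hu fun k => h_two (2 * k)
  have h_odd : Tendsto (fun k => P (2 * k + 1)) atTop (nhds 0) := by
    have hbound := (h_even.pow 2).const_mul c
    rw [zero_pow two_ne_zero, mul_zero] at hbound
    exact squeeze_zero (fun k => hP _) (fun k => h_one (2 * k)) hbound
  exact tendsto_of_tendsto_even_odd h_even h_odd

theorem sum_mul_mul_sum_mul_le_of_mul_le {ι : Type*} (s : Finset ι) {f g w : ι → ℝ} {M : ℝ}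
    (hw : ∀ i ∈ s, 0 ≤ w i) (hfg : ∀ i ∈ s, ∀ j ∈ s, f i * g j ≤ M) :
    (∑ i ∈ s, f i * w i) * (∑ j ∈ s, g j * w j) ≤ M * (∑ i ∈ s, w i) ^ 2 := by
  rw [sq, Finset.sum_mul_sum, Finset.sum_mul_sum, Finset.mul_sum]
  refine Finset.sum_le_sum fun i hi => ?_
  rw [Finset.mul_sum]
  refine Finset.sum_le_sum fun j hj => ?_
  calc f i * w i * (g j * w j) = (f i * g j) * (w i * w j) := by ring
    _ ≤ M * (w i * w j) := by gcongr; exacts [mul_nonneg (hw i hi) (hw j hj), hfg i hi j hj]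

section Gonosomic

variable {n ν : ℕ} {γ : Fin n → Fin ν → Fin n → ℝ} {γ' : Fin n → Fin ν → Fin ν → ℝ}

theorem sum_fst_W (z : (Fin n → ℝ) × (Fin ν → ℝ)) :
    ∑ k, (W γ γ' z).1 k = ∑ ip : Fin n × Fin ν, gA γ ip.1 ip.2 * (z.1 ip.1 * z.2 ip.2) := by
  simp only [W, gA, Fintype.sum_prod_type, Finset.sum_mul, mul_assoc]
  rw [Finset.sum_comm]
  exact Finset.sum_congr rfl fun i _ => Finset.sum_comm

theorem sum_snd_W (z : (Fin n → ℝ) × (Fin ν → ℝ)) :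
    ∑ r, (W γ γ' z).2 r = ∑ ip : Fin n × Fin ν, gB γ' ip.1 ip.2 * (z.1 ip.1 * z.2 ip.2) := by
  simp only [W, gB, Fintype.sum_prod_type, Finset.sum_mul, mul_assoc]
  rw [Finset.sum_comm]
  exact Finset.sum_congr rfl fun i _ => Finset.sum_comm

theorem piW_W (z : (Fin n → ℝ) × (Fin ν → ℝ)) :
    piW (W γ γ' z) = ∑ ip : Fin n × Fin ν, σc γ γ' ip.1 ip.2 * (z.1 ip.1 * z.2 ip.2) := by
  simp only [piW, sum_fst_W, sum_snd_W, σc, add_mul, Finset.sum_add_distrib]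

theorem sum_mul_eq_sum_fst_mul_sum_snd (z : (Fin n → ℝ) × (Fin ν → ℝ)) :
    ∑ ip : Fin n × Fin ν, z.1 ip.1 * z.2 ip.2 = (∑ i, z.1 i) * ∑ p, z.2 p := by
  rw [Fintype.sum_prod_type, Fintype.sum_mul_sum]

theorem four_mul_sum_fst_mul_sum_snd_le (z : (Fin n → ℝ) × (Fin ν → ℝ)) :
    4 * ∑ ip : Fin n × Fin ν, z.1 ip.1 * z.2 ip.2 ≤ piW z ^ 2 := by
  rw [sum_mul_eq_sum_fst_mul_sum_snd, ← mul_assoc]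
  exact four_mul_le_sq_add _ _

theorem piW_nonneg {z : (Fin n → ℝ) × (Fin ν → ℝ)} (hz : 0 ≤ z) : 0 ≤ piW z :=
  add_nonneg (Finset.sum_nonneg fun i _ => hz.1 i) (Finset.sum_nonneg fun p _ => hz.2 p)

theorem W_nonneg (hγ : ∀ i p k, 0 ≤ γ i p k) (hγ' : ∀ i p r, 0 ≤ γ' i p r)
    {z : (Fin n → ℝ) × (Fin ν → ℝ)} (hz : 0 ≤ z) : 0 ≤ W γ γ' z := by
  refine ⟨fun k => ?_, fun r => ?_⟩ <;>
    dsimp only [W, Prod.fst_zero, Prod.snd_zero, Pi.zero_apply]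
  · exact Finset.sum_nonneg fun i _ => Finset.sum_nonneg fun p _ =>
      mul_nonneg (mul_nonneg (hγ i p k) (hz.1 i)) (hz.2 p)
  · exact Finset.sum_nonneg fun i _ => Finset.sum_nonneg fun p _ =>
      mul_nonneg (mul_nonneg (hγ' i p r) (hz.1 i)) (hz.2 p)

theorem W_iterate_nonneg (hγ : ∀ i p k, 0 ≤ γ i p k) (hγ' : ∀ i p r, 0 ≤ γ' i p r)
    {z : (Fin n → ℝ) × (Fin ν → ℝ)} (hz : 0 ≤ z) (t : ℕ) :
    0 ≤ (W γ γ')^[t] z := by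
  induction t with
  | zero => exact hz
  | succ t ih => rw [Function.iterate_succ_apply']; exact W_nonneg hγ hγ' ih

theorem piW_W_le_of_σc_le {M : ℝ} (hσ : ∀ i p, σc γ γ' i p ≤ M)
    {z : (Fin n → ℝ) × (Fin ν → ℝ)} (hz : 0 ≤ z) :
    piW (W γ γ' z) ≤ M * ∑ ip : Fin n × Fin ν, z.1 ip.1 * z.2 ip.2 := by
  rw [piW_W, Finset.mul_sum]
  exact Finset.sum_le_sum fun ip _ =>
    mul_le_mul_of_nonneg_right (hσ ip.1 ip.2) (mul_nonneg (hz.1 ip.1) (hz.2 ip.2))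

theorem piW_W_le_sq {M : ℝ} (hσ : ∀ i p, σc γ γ' i p ≤ M) (hM : 0 ≤ M)
    {z : (Fin n → ℝ) × (Fin ν → ℝ)} (hz : 0 ≤ z) : piW (W γ γ' z) ≤ M / 4 * piW z ^ 2 := by
  have hT_le := four_mul_sum_fst_mul_sum_snd_le z
  calc piW (W γ γ' z) ≤ M * ∑ ip : Fin n × Fin ν, z.1 ip.1 * z.2 ip.2 := piW_W_le_of_σc_le hσ hz
    _ ≤ M * (piW z ^ 2 / 4) := by gcongr; linarith
    _ = M / 4 * piW z ^ 2 := by ring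

theorem piW_W_W_le (hγ : ∀ i p k, 0 ≤ γ i p k) (hγ' : ∀ i p r, 0 ≤ γ' i p r)
    {M₃ M₂ : ℝ} (hσ : ∀ i p, σc γ γ' i p ≤ M₃) (hM₃ : 0 ≤ M₃)
    (hAB : ∀ i p j q, gA γ i p * gB γ' j q ≤ M₂) (hM₂ : 0 ≤ M₂)
    {z : (Fin n → ℝ) × (Fin ν → ℝ)} (hz : 0 ≤ z) :
    piW (W γ γ' (W γ γ' z)) ≤ M₃ * M₂ / 16 * piW z ^ 4 := by
  set T := ∑ ip : Fin n × Fin ν, z.1 ip.1 * z.2 ip.2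
  have hzz : ∀ ip : Fin n × Fin ν, 0 ≤ z.1 ip.1 * z.2 ip.2 := fun ip =>
    mul_nonneg (hz.1 ip.1) (hz.2 ip.2)
  have hT : 0 ≤ T := Finset.sum_nonneg fun ip _ => hzz ip
  have hT_le : 4 * T ≤ piW z ^ 2 := four_mul_sum_fst_mul_sum_snd_le z
  calc piW (W γ γ' (W γ γ' z))
      ≤ M₃ * ((∑ k, (W γ γ' z).1 k) * ∑ r, (W γ γ' z).2 r) := by
        rw [← sum_mul_eq_sum_fst_mul_sum_snd]
        exact piW_W_le_of_σc_le hσ (W_nonneg hγ hγ' hz)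
    _ ≤ M₃ * (M₂ * T ^ 2) := by
        rw [sum_fst_W, sum_snd_W]
        exact mul_le_mul_of_nonneg_left (sum_mul_mul_sum_mul_le_of_mul_le _ (fun ip _ => hzz ip)
          fun ip _ jq _ => hAB ip.1 ip.2 jq.1 jq.2) hM₃
    _ ≤ M₃ * (M₂ * (piW z ^ 2 / 4) ^ 2) := by gcongr; linarith
    _ = M₃ * M₂ / 16 * piW z ^ 4 := by ring

end Gonosomic

theorem stmt_13_general {n ν : ℕ}
    (γ : Fin n → Fin ν → Fin n → ℝ) (γ' : Fin n → Fin ν → Fin ν → ℝ)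
    (hγ : ∀ i p k, 0 ≤ γ i p k) (hγ' : ∀ i p r, 0 ≤ γ' i p r)
    (M₃ : ℝ) (hM₃ : IsGreatest
      (Set.range fun ip : Fin n × Fin ν =>
        max (σc γ γ' ip.1 ip.2) (σc γ γ' ip.1 ip.2 ^ 4)) M₃)
    (M₂ : ℝ) (hM₂ : IsGreatest
      (Set.range fun x : (Fin n × Fin ν) × (Fin n × Fin ν) =>
        gA γ x.1.1 x.1.2 * gB γ' x.2.1 x.2.2) M₂)
    (z : (Fin n → ℝ) × (Fin ν → ℝ)) (hz1 : ∀ i, 0 ≤ z.1 i) (hz2 : ∀ p, 0 ≤ z.2 p)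
    (h : ((1 / 16) * M₃ * M₂) ^ ((1 : ℝ) / 3) * piW z < 1) :
    Filter.Tendsto (fun t : ℕ => piW ((W γ γ')^[t] z)) Filter.atTop (nhds 0) := by
  have hz : 0 ≤ z := ⟨hz1, hz2⟩
  have gA_nonneg i p : 0 ≤ gA γ i p := Finset.sum_nonneg fun k _ => hγ i p k
  have gB_nonneg i p : 0 ≤ gB γ' i p := Finset.sum_nonneg fun r _ => hγ' i p r
  have hσ i p : σc γ γ' i p ≤ M₃ := (le_max_left _ _).trans (hM₃.2 ⟨(i, p), rfl⟩)
  have hAB i p j q : gA γ i p * gB γ' j q ≤ M₂ := hM₂.2 ⟨((i, p), (j, q)), rfl⟩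
  have hM₃0 : 0 ≤ M₃ := by
    obtain ⟨ip, rfl⟩ := hM₃.1
    exact (add_nonneg (gA_nonneg ..) (gB_nonneg ..)).trans (le_max_left _ _)
  have hM₂0 : 0 ≤ M₂ := by
    obtain ⟨x, rfl⟩ := hM₂.1
    exact mul_nonneg (gA_nonneg ..) (gB_nonneg ..)
  have ha3 : (((1 / 16) * M₃ * M₂) ^ ((1 : ℝ) / 3)) ^ 3 = M₃ * M₂ / 16 := by
    rw [← Real.rpow_natCast, ← Real.rpow_mul (by positivity)]
    norm_num
    ring
  refine tendsto_zero_of_le_sq_of_le_pow_four (c := M₃ / 4) (by positivity)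
    (fun t => piW_nonneg (W_iterate_nonneg hγ hγ' hz t)) h (fun t => ?_) (fun t => ?_)
  · rw [Function.iterate_succ_apply']
    exact piW_W_le_sq hσ hM₃0 (W_iterate_nonneg hγ hγ' hz t)
  · rw [ha3, Function.iterate_succ_apply', Function.iterate_succ_apply']
    exact piW_W_W_le hγ hγ' hσ hM₃0 hAB hM₂0 (W_iterate_nonneg hγ hγ' hz t)

/-- Suppose the structure constants are nonnegative and let `z` be
nonnegative.  If
`((1/16) · max_{i,p} max(σ_{ip}, σ_{ip}⁴) · max_{(i,p),(j,q)} γ_{ip} γ̃_{jq})^(1/3) · ϖ(z) < 1`,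
then `ϖ(W^t z) → 0` as `t → +∞`. -/
theorem stmt_13 {n ν : ℕ} (hn : 1 ≤ n) (hν : 1 ≤ ν)
    (γ : Fin n → Fin ν → Fin n → ℝ) (γ' : Fin n → Fin ν → Fin ν → ℝ)
    (hγ : ∀ i p k, 0 ≤ γ i p k) (hγ' : ∀ i p r, 0 ≤ γ' i p r)
    (M₃ : ℝ) (hM₃ : IsGreatest
      (Set.range fun ip : Fin n × Fin ν =>
        max (σc γ γ' ip.1 ip.2) (σc γ γ' ip.1 ip.2 ^ 4)) M₃)
    (M₂ : ℝ) (hM₂ : IsGreatest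
      (Set.range fun x : (Fin n × Fin ν) × (Fin n × Fin ν) =>
        gA γ x.1.1 x.1.2 * gB γ' x.2.1 x.2.2) M₂)
    (z : (Fin n → ℝ) × (Fin ν → ℝ)) (hz1 : ∀ i, 0 ≤ z.1 i) (hz2 : ∀ p, 0 ≤ z.2 p)
    (h : ((1 / 16) * M₃ * M₂) ^ ((1 : ℝ) / 3) * piW z < 1) :
    Filter.Tendsto (fun t : ℕ => piW ((W γ γ')^[t] z)) Filter.atTop (nhds 0) :=
  stmt_13_general γ γ' hγ hγ' M₃ hM₃ M₂ hM₂ z hz1 hz2 h
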